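/- For all 0<q<1 and every integer n≥2, writing H=⌊n/2⌋ and letting δ_odd(n)=1 if n is odd and 0 if n is even, the offset satisfies b_n(q) − 2κ(q)·Σ_{k=0}^{H−1}(λ_k(q) − κ(q)) < 2H·q^{H+1} + δ_odd(n)·(λ_H(q)² − κ(q)²). -/

import Mathlib

/-- Partial product of the Euler function: `λ_k(q) = ∏_{i=1}^k (1 - q^i)`, with `λ_0(q) = 1`. -/
noncomputable def eulerLam (q : ℝ) (k : ℕ) : ℝ := ∏ i ∈ Finset.range k, (1 - q ^ (i + 1))

/-- The Euler function `κ(q) = ∏_{i=1}^∞ (1 - q^i)`. -/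
noncomputable def eulerKappa (q : ℝ) : ℝ := ∏' i : ℕ, (1 - q ^ (i + 1))

/-- The tail product `μ_n(q) = ∏_{i=n}^∞ (1 - q^i)`. -/
noncomputable def eulerMu (q : ℝ) (n : ℕ) : ℝ := ∏' i : ℕ, (1 - q ^ (n + i))

/-- The offset `b_n(q) = Σ_{k=1}^n λ_{k-1}(q) λ_{n-k}(q) - n κ(q)²`, the expected number of
posts in a random graph order on `n` elements minus `n κ(q)²`. -/
noncomputable def postOffset (q : ℝ) (n : ℕ) : ℝ :=
  (∑ k ∈ Finset.Icc 1 n, eulerLam q (k - 1) * eulerLam q (n - k)) - n * eulerKappa q ^ 2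

/-
Pairing the terms `k` and `n + 1 - k` of the convolution `∑ λ_{k-1} λ_{n-k}` turns the left
side into `2 ∑_{i<H} λ_i (λ_{n-1-i} - κ)` plus, for odd `n`, the middle term `λ_H² - κ²`. The
Weierstrass inequality `∏ (1 - x_i) ≥ 1 - ∑ x_i` on the tail of the Euler product gives
`κ ≥ λ_m (1 - q^{m+1} / (1 - q))`, strictly so after splitting off one more factor. Hence
`λ_i (λ_m - κ) < λ_i λ_m q^{m+1} / (1 - q) ≤ q^{m+1} ≤ q^{H+1}`, because `λ_m ≤ 1 - q` for
`m ≥ 1` and `m = n - 1 - i ≥ H`.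
-/

open Finset Filter Topology

theorem Finset.one_sub_sum_le_prod_one_sub {ι R : Type*} [CommRing R] [LinearOrder R]
    [IsStrictOrderedRing R] (s : Finset ι) {x : ι → R} (hx0 : ∀ i ∈ s, 0 ≤ x i)
    (hx1 : ∀ i ∈ s, x i ≤ 1) :
    1 - ∑ i ∈ s, x i ≤ ∏ i ∈ s, (1 - x i) := by
  classical
  induction s using Finset.induction_on with
  | empty => simp
  | insert j s hj ih =>
    rw [sum_insert hj, prod_insert hj]
    have hprod := ih (fun i hi => hx0 i (mem_insert_of_mem hi))
      (fun i hi => hx1 i (mem_insert_of_mem hi))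
    have hsum : 0 ≤ ∑ i ∈ s, x i := sum_nonneg fun i hi => hx0 i (mem_insert_of_mem hi)
    nlinarith [hx0 j (mem_insert_self j s), hx1 j (mem_insert_self j s)]

theorem Finset.sum_range_eq_two_nsmul_sum_range_half_add {M : Type*} [AddCommMonoid M]
    {g : ℕ → M} {n : ℕ} (hg : ∀ i < n, g (n - 1 - i) = g i) :
    ∑ i ∈ range n, g i = 2 • ∑ i ∈ range (n / 2), g i + (n % 2) • g (n / 2) := by
  set H := n / 2
  have hupper : ∑ i ∈ Ico H n, g i = ∑ i ∈ range (H + n % 2), g i := by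
    rw [sum_Ico_eq_sum_range, show n - H = H + n % 2 by omega,
      ← sum_range_reflect (fun i => g (H + i))]
    refine sum_congr rfl fun i hi => ?_
    rw [mem_range] at hi
    rw [show H + (H + n % 2 - 1 - i) = n - 1 - i by omega, hg i (by omega)]
  rw [← sum_range_add_sum_Ico g (show H ≤ n by omega), hupper, sum_range_add, two_nsmul,
    add_assoc]
  rcases Nat.mod_two_eq_zero_or_one n with h | h <;> simp [h]

section EulerProducts

variable {q : ℝ}

theorem eulerLam_pos (hq0 : 0 ≤ q) (hq1 : q < 1) (k : ℕ) : 0 < eulerLam q k :=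
  prod_pos fun i _ => sub_pos.2 (pow_lt_one₀ hq0 hq1 i.succ_ne_zero)

theorem eulerLam_succ (k : ℕ) : eulerLam q (k + 1) = eulerLam q k * (1 - q ^ (k + 1)) :=
  prod_range_succ _ k

theorem eulerLam_antitone (hq0 : 0 ≤ q) (hq1 : q ≤ 1) : Antitone (eulerLam q) := by
  intro k m hkm
  rw [eulerLam, eulerLam, ← prod_range_mul_prod_Ico _ hkm]
  have hfac0 (i : ℕ) : 0 ≤ 1 - q ^ (i + 1) := sub_nonneg.2 (pow_le_one₀ hq0 hq1)
  exact mul_le_of_le_one_right (prod_nonneg fun i _ => hfac0 i)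
    (prod_le_one (fun i _ => hfac0 i) fun i _ => sub_le_self _ (pow_nonneg hq0 _))

theorem eulerLam_le_one (hq0 : 0 ≤ q) (hq1 : q ≤ 1) (k : ℕ) : eulerLam q k ≤ 1 :=
  eulerLam_antitone hq0 hq1 k.zero_le

theorem eulerLam_le_one_sub (hq0 : 0 ≤ q) (hq1 : q ≤ 1) {k : ℕ} (hk : 1 ≤ k) :
    eulerLam q k ≤ 1 - q := by
  simpa [eulerLam] using eulerLam_antitone hq0 hq1 hk

theorem hasProd_eulerKappa (hq : |q| < 1) :
    HasProd (fun i : ℕ => 1 - q ^ (i + 1)) (eulerKappa q) := by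
  have hsum : Summable fun i : ℕ => -q ^ (i + 1) :=
    ((summable_geometric_of_abs_lt_one hq).comp_injective (add_left_injective 1)).neg
  have hmul : Multipliable fun i : ℕ => 1 - q ^ (i + 1) := by
    simpa [sub_eq_add_neg] using Real.multipliable_one_add_of_summable hsum
  exact hmul.hasProd

theorem tendsto_eulerLam (hq : |q| < 1) : Tendsto (eulerLam q) atTop (𝓝 (eulerKappa q)) :=
  (hasProd_eulerKappa hq).tendsto_prod_nat

theorem eulerLam_mul_le_eulerLam (hq0 : 0 ≤ q) (hq1 : q < 1) {m N : ℕ} (hmN : m ≤ N) :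
    eulerLam q m * (1 - q ^ (m + 1) / (1 - q)) ≤ eulerLam q N := by
  have htail : 1 - q ^ (m + 1) / (1 - q) ≤ ∏ i ∈ Ico m N, (1 - q ^ (i + 1)) := by
    have hgeom : ∑ i ∈ Ico m N, q ^ (i + 1) ≤ q ^ (m + 1) / (1 - q) := by
      simpa [pow_succ, ← sum_mul, div_mul_eq_mul_div] using
        mul_le_mul_of_nonneg_right (geom_sum_Ico_le_of_lt_one (m := m) (n := N) hq0 hq1) hq0
    refine le_trans ?_ (one_sub_sum_le_prod_one_sub _ (fun i _ => by positivity)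
      fun i _ => pow_le_one₀ hq0 hq1.le)
    linarith
  rw [eulerLam, eulerLam, ← prod_range_mul_prod_Ico _ hmN]
  exact mul_le_mul_of_nonneg_left htail (eulerLam_pos hq0 hq1 m).le

theorem eulerLam_mul_le_eulerKappa (hq0 : 0 ≤ q) (hq1 : q < 1) (m : ℕ) :
    eulerLam q m * (1 - q ^ (m + 1) / (1 - q)) ≤ eulerKappa q :=
  ge_of_tendsto (tendsto_eulerLam ((abs_of_nonneg hq0).trans_lt hq1))
    (eventually_atTop.2 ⟨m, fun _ => eulerLam_mul_le_eulerLam hq0 hq1⟩)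

-- Strictness: the tail bound taken one factor later is larger by `λ_m q^{2m+3} / (1 - q)`.
theorem eulerLam_sub_eulerKappa_lt (hq0 : 0 < q) (hq1 : q < 1) (m : ℕ) :
    eulerLam q m - eulerKappa q < eulerLam q m * (q ^ (m + 1) / (1 - q)) := by
  have hκ := eulerLam_mul_le_eulerKappa hq0.le hq1 (m + 1)
  rw [eulerLam_succ] at hκ
  have h1q : 0 < 1 - q := sub_pos.2 hq1
  have hgain : 1 - q ^ (m + 1) / (1 - q) <
      (1 - q ^ (m + 1)) * (1 - q ^ (m + 1 + 1) / (1 - q)) := by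
    have hsq : 0 < (q ^ (m + 1)) ^ 2 * q / (1 - q) := by positivity
    have hid : (1 - q ^ (m + 1)) * (1 - q ^ (m + 1 + 1) / (1 - q)) =
        1 - q ^ (m + 1) / (1 - q) + (q ^ (m + 1)) ^ 2 * q / (1 - q) := by
      field_simp
      ring
    linarith
  linarith [mul_lt_mul_of_pos_left hgain (eulerLam_pos hq0.le hq1 m)]

theorem eulerLam_mul_sub_eulerKappa_lt (hq0 : 0 < q) (hq1 : q < 1) (k : ℕ) {m : ℕ}
    (hm : 1 ≤ m) : eulerLam q k * (eulerLam q m - eulerKappa q) < q ^ (m + 1) := by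
  have hk := eulerLam_pos hq0.le hq1 k
  have hkm : eulerLam q k * eulerLam q m ≤ 1 - q :=
    (mul_le_of_le_one_left (eulerLam_pos hq0.le hq1 m).le (eulerLam_le_one hq0.le hq1.le k)).trans
      (eulerLam_le_one_sub hq0.le hq1.le hm)
  calc eulerLam q k * (eulerLam q m - eulerKappa q)
      < eulerLam q k * (eulerLam q m * (q ^ (m + 1) / (1 - q))) :=
        mul_lt_mul_of_pos_left (eulerLam_sub_eulerKappa_lt hq0 hq1 m) hk
    _ = eulerLam q k * eulerLam q m * (q ^ (m + 1) / (1 - q)) := by ring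
    _ ≤ (1 - q) * (q ^ (m + 1) / (1 - q)) := by gcongr
    _ = q ^ (m + 1) := mul_div_cancel₀ _ (sub_pos.2 hq1).ne'

end EulerProducts

theorem sum_Icc_eulerLam_mul_eulerLam (q : ℝ) (n : ℕ) :
    ∑ k ∈ Icc 1 n, eulerLam q (k - 1) * eulerLam q (n - k) =
      ∑ i ∈ range n, eulerLam q i * eulerLam q (n - 1 - i) := by
  rw [← Ico_add_one_right_eq_Icc, sum_Ico_eq_sum_range, Nat.add_sub_cancel]
  refine sum_congr rfl fun i _ => ?_
  rw [Nat.add_sub_cancel_left, Nat.sub_sub, add_comm 1 i]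

theorem postOffset_sub_eq_two_mul_sum_add (q : ℝ) (n : ℕ) :
    postOffset q n - 2 * eulerKappa q * ∑ k ∈ range (n / 2), (eulerLam q k - eulerKappa q) =
      2 * ∑ i ∈ range (n / 2), eulerLam q i * (eulerLam q (n - 1 - i) - eulerKappa q) +
        (n % 2 : ℕ) * (eulerLam q (n / 2) ^ 2 - eulerKappa q ^ 2) := by
  have hsymm : ∀ i < n, eulerLam q (n - 1 - i) * eulerLam q (n - 1 - (n - 1 - i)) =
      eulerLam q i * eulerLam q (n - 1 - i) := fun i hi => by
    rw [Nat.sub_sub_self (by omega), mul_comm]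
  have hmid : n % 2 = 1 → n - 1 - n / 2 = n / 2 := by omega
  have hn : (n : ℝ) = 2 * (n / 2 : ℕ) + (n % 2 : ℕ) := by
    exact_mod_cast (Nat.div_add_mod n 2).symm
  rw [postOffset, sum_Icc_eulerLam_mul_eulerLam, sum_range_eq_two_nsmul_sum_range_half_add hsymm,
    hn]
  simp only [nsmul_eq_mul, mul_sub, sum_sub_distrib, sum_const, card_range, ← sum_mul]
  rcases Nat.mod_two_eq_zero_or_one n with h | h
  · simp only [h, Nat.cast_zero, zero_mul, add_zero]
    ring
  · rw [h, hmid h]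
    ring

/-- For all `0 < q < 1` and every integer `n ≥ 2`, with `H = ⌊n/2⌋` and `δ_odd(n) = 1` if `n`
is odd and `0` otherwise, `b_n(q) - 2κ(q)·Σ_{k=0}^{H-1}(λ_k(q) - κ(q))
< 2H·q^{H+1} + δ_odd(n)·(λ_H(q)² - κ(q)²)`. -/
theorem postOffset_sub_partial_lt (q : ℝ) (hq0 : 0 < q) (hq1 : q < 1) (n : ℕ) (hn : 2 ≤ n) :
    postOffset q n -
        2 * eulerKappa q * ∑ k ∈ Finset.range (n / 2), (eulerLam q k - eulerKappa q) <
      2 * (n / 2 : ℕ) * q ^ (n / 2 + 1) +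
        (if n % 2 = 1 then (1 : ℝ) else 0) * (eulerLam q (n / 2) ^ 2 - eulerKappa q ^ 2) := by
  have hparity : ((n % 2 : ℕ) : ℝ) = if n % 2 = 1 then 1 else 0 := by
    rcases Nat.mod_two_eq_zero_or_one n with h | h <;> simp [h]
  have hterm : ∀ i ∈ range (n / 2),
      eulerLam q i * (eulerLam q (n - 1 - i) - eulerKappa q) < q ^ (n / 2 + 1) := by
    intro i hi
    rw [mem_range] at hi
    exact (eulerLam_mul_sub_eulerKappa_lt hq0 hq1 i (by omega)).trans_le
      (pow_le_pow_of_le_one hq0.le hq1.le (by omega))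
  have hsum := sum_lt_sum_of_nonempty (nonempty_range_iff.2 (by omega)) hterm
  rw [sum_const, card_range, nsmul_eq_mul] at hsum
  rw [postOffset_sub_eq_two_mul_sum_add, ← hparity]
  linarith
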